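/- Let n ≥ 1 and let γ ∈ H(K_n × K_n) satisfy H(pr_1)(γ) = e_{K_n}(β) and H(pr_2)(γ) = e_{K_n}(β). Then supp γ is contained in the diagonal {(i, i) : i = 1, …, n} of K_n × K_n. -/

import Mathlib

open scoped Topology

/-- The index set `S(X)`: triples `(φ, a, b)` with `φ : X → ℝ` continuous and
`0 ≤ a < b ≤ 1`. -/
structure SIdx (X : Type u) [TopologicalSpace X] : Type u where
  φ : C(X, ℝ)
  a : ℝ
  b : ℝ
  ha : 0 ≤ a
  hab : a < b
  hb : b ≤ 1

/-- `α : ℝ → X` is a step function on `[0,1)`: there is a partition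
`0 = t 0 < t 1 < ⋯ < t k = 1` with `α` constant on each `[t j, t (j+1))`. -/
def IsStep {X : Type u} (α : ℝ → X) : Prop :=
  ∃ (k : ℕ) (t : ℕ → ℝ), 1 ≤ k ∧ t 0 = 0 ∧ t k = 1 ∧ (∀ j < k, t j < t (j + 1)) ∧
    ∀ j < k, ∀ s ∈ Set.Ico (t j) (t (j + 1)), α s = α (t j)

/-- The embedding `e_X`, sending `α` to the point of `∏_{S(X)} ℝ` whose
`(φ, a, b)`-coordinate is `(1/(b-a)) ∫_a^b φ(α t) dt`. -/
noncomputable def eHM {X : Type u} [TopologicalSpace X] (α : ℝ → X) : SIdx X → ℝ :=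
  fun s => (1 / (s.b - s.a)) * ∫ t in s.a..s.b, s.φ (α t)

/-- `H(X)` as a subset of `∏_{S(X)} ℝ`: the closure of the image under `e_X`
of the set of step functions. -/
def HSet (X : Type u) [TopologicalSpace X] : Set (SIdx X → ℝ) :=
  closure (eHM '' {α : ℝ → X | IsStep α})

/-- `H(X)` as a topological space (subspace of the product `∏_{S(X)} ℝ`). -/
abbrev HSp (X : Type u) [TopologicalSpace X] : Type u := ↥(HSet X)

/-- `H_X(A)`: the closure of the image under `e_X` of the step functions taking
values in `A` on `[0,1)`. -/
def HSetOn (X : Type u) [TopologicalSpace X] (A : Set X) : Set (SIdx X → ℝ) :=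
  closure (eHM '' {α : ℝ → X | IsStep α ∧ ∀ t ∈ Set.Ico (0:ℝ) 1, α t ∈ A})

/-- The support of `ν`: the intersection of all closed `A ⊆ X` with `ν ∈ H_X(A)`. -/
def suppH {X : Type u} [TopologicalSpace X] (ν : SIdx X → ℝ) : Set X :=
  ⋂₀ {A : Set X | IsClosed A ∧ ν ∈ HSetOn X A}

/-- The reindexing map `R_f : ∏_{S(X)} ℝ → ∏_{S(Y)} ℝ`, `R_f x (ψ,a,b) = x (ψ∘f,a,b)`. -/
def reindex {X : Type u} {Y : Type v} [TopologicalSpace X] [TopologicalSpace Y]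
    (f : C(X, Y)) : (SIdx X → ℝ) → (SIdx Y → ℝ) :=
  fun x s => x ⟨s.φ.comp f, s.a, s.b, s.ha, s.hab, s.hb⟩

lemma isStep_comp {X : Type u} {Y : Type v} (f : X → Y) {α : ℝ → X} (h : IsStep α) :
    IsStep (f ∘ α) := by
  obtain ⟨k, t, hk, h0, h1, hm, hc⟩ := h
  exact ⟨k, t, hk, h0, h1, hm, fun j hj s hs => congrArg f (hc j hj s hs)⟩

lemma isStep_const {X : Type u} (x : X) : IsStep (fun _ : ℝ => x) :=
  ⟨1, fun j => (j : ℝ), le_refl 1, by simp, by simp,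
    fun j _ => by simp, fun _ _ _ _ => rfl⟩

/-- The point `e_X(α)` of `H(X)`, for a step function `α`. -/
noncomputable def toH {X : Type u} [TopologicalSpace X] (α : ℝ → X) (h : IsStep α) : HSp X :=
  ⟨eHM α, subset_closure ⟨α, h, rfl⟩⟩

lemma continuous_reindex {X : Type u} {Y : Type v} [TopologicalSpace X] [TopologicalSpace Y]
    (f : C(X, Y)) : Continuous (reindex f) :=
  continuous_pi fun _ => continuous_apply _

lemma reindex_mapsTo {X : Type u} {Y : Type v} [TopologicalSpace X] [TopologicalSpace Y]
    (f : C(X, Y)) : Set.MapsTo (reindex f) (HSet X) (HSet Y) := by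
  intro x hx
  have h2 := image_closure_subset_closure_image (s := eHM '' {α : ℝ → X | IsStep α})
    (continuous_reindex f)
  have h3 : reindex f '' (eHM '' {α : ℝ → X | IsStep α}) ⊆ eHM '' {α : ℝ → Y | IsStep α} := by
    rintro _ ⟨_, ⟨α, hα, rfl⟩, rfl⟩
    exact ⟨f ∘ α, isStep_comp f hα, rfl⟩
  exact closure_mono h3 (h2 ⟨x, hx, rfl⟩)

/-- The map `H(f) : H(X) → H(Y)` induced by a continuous `f : X → Y`, i.e. the
restriction of the reindexing map `R_f`. -/
noncomputable def Hmap {X : Type u} {Y : Type v} [TopologicalSpace X] [TopologicalSpace Y]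
    (f : C(X, Y)) : C(HSp X, HSp Y) where
  toFun x := ⟨reindex f x.1, reindex_mapsTo f x.2⟩
  continuous_toFun :=
    Continuous.subtype_mk ((continuous_reindex f).comp continuous_subtype_val) _

/-- The unit `η_X : X → H(X)`, `x ↦ e_X(const x)`. -/
noncomputable def etaMap (X : Type u) [TopologicalSpace X] : C(X, HSp X) where
  toFun x := toH (fun _ : ℝ => x) (isStep_const x)
  continuous_toFun := by
    refine Continuous.subtype_mk (continuous_pi fun s => ?_) _
    simp only [eHM, intervalIntegral.integral_const]
    exact continuous_const.mul ((s.φ.continuous).const_smul (s.b - s.a))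
/-- The index (0-based) of the subinterval `[i/n, (i+1)/n)` of `[0,1)` containing `s`
(as a natural number, clipped to `n - 1`). -/
noncomputable def stepIdxNat (n : ℕ) (s : ℝ) : ℕ := min ⌊s * n⌋₊ (n - 1)

lemma stepIdxNat_eq {n j : ℕ} (hj : j < n) {s : ℝ}
    (h1 : (j : ℝ) / n ≤ s) (h2 : s < ((j : ℝ) + 1) / n) : stepIdxNat n s = j := by
  have hn : (0:ℝ) < n := by
    have : 0 < n := by omega
    exact_mod_cast this
  have h1' : (j : ℝ) ≤ s * n := by rw [div_le_iff₀ hn] at h1; exact h1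
  have h2' : s * n < (j : ℝ) + 1 := by rw [lt_div_iff₀ hn] at h2; exact h2
  have hfl : ⌊s * n⌋₊ = j := by
    rw [Nat.floor_eq_iff (le_trans (Nat.cast_nonneg j) h1')]
    exact ⟨h1', h2'⟩
  unfold stepIdxNat
  omega

lemma isStep_stepIdxNat (n : ℕ) : IsStep (stepIdxNat n) := by
  rcases Nat.eq_zero_or_pos n with rfl | hn
  · exact ⟨1, fun j => (j : ℝ), le_refl 1, by simp, by simp, fun j _ => by simp,
      fun j hj s hs => by simp [stepIdxNat]⟩
  · have hnR : (0:ℝ) < n := by exact_mod_cast hn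
    refine ⟨n, fun j => (j : ℝ) / n, hn, by simp, by field_simp,
      fun j hj => ?_, fun j hj s hs => ?_⟩
    · exact (div_lt_div_iff_of_pos_right hnR).mpr (by push_cast; linarith)
    · obtain ⟨hs1, hs2⟩ := hs
      have hs2' : s < ((j : ℝ) + 1) / n := by
        simpa using hs2
      rw [stepIdxNat_eq hj hs1 hs2',
        stepIdxNat_eq hj (le_refl _) ((div_lt_div_iff_of_pos_right hnR).mpr (by linarith))]
/-- The step function `β : [0,1) → K_n`, `β(s) = i` for `s ∈ [i/n, (i+1)/n)`,
with `K_n` realized as `Fin n` (0-based indexing). -/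
noncomputable def stepIdx (n : ℕ) [NeZero n] (s : ℝ) : Fin n :=
  ⟨stepIdxNat n s, by
    have := NeZero.ne n
    unfold stepIdxNat
    omega⟩

lemma isStep_stepIdx (n : ℕ) [NeZero n] : IsStep (stepIdx n) := by
  have hn := NeZero.ne n
  have h : stepIdx n =
      (fun m : ℕ => (⟨min m (n - 1), by omega⟩ : Fin n)) ∘ stepIdxNat n := by
    funext s
    apply Fin.ext
    simp [stepIdx, stepIdxNat, min_assoc]
  rw [h]
  exact isStep_comp _ (isStep_stepIdxNat n)

/-- The diagonal step function `α : [0,1) → K_n × K_n`, `α(s) = (i,i)` for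
`s ∈ [i/n, (i+1)/n)`. -/
noncomputable def alphaDiag (n : ℕ) [NeZero n] : ℝ → Fin n × Fin n :=
  fun s => (stepIdx n s, stepIdx n s)

lemma isStep_alphaDiag (n : ℕ) [NeZero n] : IsStep (alphaDiag n) :=
  isStep_comp (fun i : Fin n => (i, i)) (isStep_stepIdx n)

/-- The step function `α_i : [0,1) → K_n × K_n`, `α_i(s) = (i,j)` for
`s ∈ [j/n, (j+1)/n)`. -/
noncomputable def alphaRow (n : ℕ) [NeZero n] (i : Fin n) : ℝ → Fin n × Fin n :=
  fun s => (i, stepIdx n s)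

lemma isStep_alphaRow (n : ℕ) [NeZero n] (i : Fin n) : IsStep (alphaRow n i) :=
  isStep_comp (fun j : Fin n => (i, j)) (isStep_stepIdx n)

/-- The step function `A_n : [0,1) → H(K_n × K_n)`, `A_n(s) = e(α_i)` for
`s ∈ [i/n, (i+1)/n)`. -/
noncomputable def An (n : ℕ) [NeZero n] : ℝ → HSp (Fin n × Fin n) :=
  fun s => toH (alphaRow n (stepIdx n s)) (isStep_alphaRow n _)

lemma isStep_An (n : ℕ) [NeZero n] : IsStep (An n) :=
  isStep_comp (fun i : Fin n => toH (alphaRow n i) (isStep_alphaRow n i)) (isStep_stepIdx n)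

/-- The step function `γ_i^{(n)} : [0,1) → D = {0,1}` which is `1` on
`[i/n, (i+1)/n)` and `0` elsewhere, with `D` realized as `Bool`. -/
noncomputable def gammaStep (n i : ℕ) : ℝ → Bool := fun s => decide (stepIdxNat n s = i)

lemma isStep_gammaStep (n i : ℕ) : IsStep (gammaStep n i) :=
  isStep_comp (fun m : ℕ => decide (m = i)) (isStep_stepIdxNat n)

/-- The step function `B_n : [0,1) → H(D)`, `B_n(s) = e(γ_i^{(n)})` for
`s ∈ [i/n, (i+1)/n)`. -/
noncomputable def Bn (n : ℕ) : ℝ → HSp Bool :=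
  fun s => toH (gammaStep n (stepIdxNat n s)) (isStep_gammaStep n _)

lemma isStep_Bn (n : ℕ) : IsStep (Bn n) :=
  isStep_comp (fun m : ℕ => toH (gammaStep n m) (isStep_gammaStep n m)) (isStep_stepIdxNat n)

/-! For finite discrete `X`, a point `γ` of `H(X)` is determined by the masses
`γ (1_p, a, b)`, which are nonnegative, monotone in the test function and additive in the interval,
since these properties are closed and hold for every `e(α)`. If both marginals of `γ` are `e(β)`,
an off-diagonal point `(i, k)` with `i < k` carries no mass left of the cut `(i + 1) / n`
(where `β ≠ k`) nor right of it (where `β ≠ i`), so none at all, and the diagonal masses are then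
read off from the first marginal. The diagonal step function `α s = (β s, β s)` has the same
masses, so `γ = e(α)`, which lies in `H_X(diagonal)`. -/

open MeasureTheory Set

lemma IsStep.intervalIntegrable {f : ℝ → ℝ} (hf : IsStep f) {a b : ℝ} (ha : 0 ≤ a) (ha1 : a ≤ 1)
    (hb : 0 ≤ b) (hb1 : b ≤ 1) : IntervalIntegrable f volume a b := by
  obtain ⟨k, t, -, h0, h1, hmono, hconst⟩ := hf
  have hcells : IntervalIntegrable f volume (t 0) (t k) := by
    refine IntervalIntegrable.trans_iterate fun j hj => ?_
    rw [intervalIntegrable_iff_integrableOn_Ico_of_le (hmono j hj).le]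
    exact (integrableOn_const (by simp) (by simp)).congr_fun
      (fun s hs => (hconst j hj s hs).symm) measurableSet_Ico
  rw [h0, h1] at hcells
  exact hcells.mono_set (uIcc_subset_uIcc (mem_uIcc_of_le ha ha1) (mem_uIcc_of_le hb hb1))

section

variable {X : Type u} [TopologicalSpace X]

lemma SIdx.intervalIntegrable_comp (s : SIdx X) (φ : C(X, ℝ)) {α : ℝ → X} (hα : IsStep α) :
    IntervalIntegrable (fun t => φ (α t)) volume s.a s.b :=
  (isStep_comp φ hα).intervalIntegrable s.ha (s.hab.le.trans s.hb) (s.ha.trans s.hab.le) s.hb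

lemma eHM_eq_zero {α : ℝ → X} {s : SIdx X}
    (h : ∀ t ∈ Ico s.a s.b, s.φ (α t) = 0) : eHM α s = 0 := by
  have : ∫ t in s.a..s.b, s.φ (α t) = ∫ _ in s.a..s.b, (0 : ℝ) :=
    intervalIntegral.integral_congr_Ioo_of_le s.hab.le fun t ht => h t (Ioo_subset_Ico_self ht)
  simp [eHM, this]

lemma HSet.induction_on {P : (SIdx X → ℝ) → Prop}
    {γ : SIdx X → ℝ} (hγ : γ ∈ HSet X) (hP : IsClosed {x | P x})
    (heHM : ∀ α, IsStep α → P (eHM α)) : P γ :=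
  closure_minimal (by rintro _ ⟨α, hα, rfl⟩; exact heHM α hα) hP hγ

def SIdx.withFun {Y : Type v} [TopologicalSpace Y] (s : SIdx X) (φ : C(Y, ℝ)) : SIdx Y :=
  ⟨φ, s.a, s.b, s.ha, s.hab, s.hb⟩

lemma HSet.coord_mono {γ : SIdx X → ℝ} (hγ : γ ∈ HSet X)
    (s : SIdx X) {φ : C(X, ℝ)} (hφ : ∀ x, s.φ x ≤ φ x) : γ s ≤ γ (s.withFun φ) := by
  refine HSet.induction_on hγ (isClosed_le (continuous_apply _) (continuous_apply _)) fun α hα => ?_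
  have hI := intervalIntegral.integral_mono_on s.hab.le (s.intervalIntegrable_comp s.φ hα)
    (s.intervalIntegrable_comp φ hα) fun t _ => hφ (α t)
  exact mul_le_mul_of_nonneg_left hI (one_div_nonneg.2 (sub_nonneg.2 s.hab.le))

lemma HSet.coord_nonneg {γ : SIdx X → ℝ} (hγ : γ ∈ HSet X)
    (s : SIdx X) (hφ : ∀ x, 0 ≤ s.φ x) : 0 ≤ γ s := by
  refine HSet.induction_on hγ (isClosed_le continuous_const (continuous_apply s)) fun α _ => ?_
  exact mul_nonneg (one_div_nonneg.2 (sub_nonneg.2 s.hab.le))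
    (intervalIntegral.integral_nonneg s.hab.le fun t _ => hφ (α t))

lemma HSet.coord_split {γ : SIdx X → ℝ} (hγ : γ ∈ HSet X)
    (φ : C(X, ℝ)) {a c b : ℝ} (ha : 0 ≤ a) (hac : a < c) (hcb : c < b) (hb : b ≤ 1) :
    (b - a) * γ ⟨φ, a, b, ha, hac.trans hcb, hb⟩ =
      (c - a) * γ ⟨φ, a, c, ha, hac, hcb.le.trans hb⟩ +
        (b - c) * γ ⟨φ, c, b, ha.trans hac.le, hcb, hb⟩ := by
  refine HSet.induction_on hγ (isClosed_eq (continuous_const.mul (continuous_apply _))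
    ((continuous_const.mul (continuous_apply _)).add (continuous_const.mul (continuous_apply _))))
    fun α hα => ?_
  have hφα := isStep_comp φ hα
  show (b - a) * (1 / (b - a) * ∫ t in a..b, φ (α t)) =
    (c - a) * (1 / (c - a) * ∫ t in a..c, φ (α t)) + (b - c) * (1 / (b - c) * ∫ t in c..b, φ (α t))
  simp only [one_div]
  rw [mul_inv_cancel_left₀ (sub_ne_zero_of_ne (hac.trans hcb).ne'),
    mul_inv_cancel_left₀ (sub_ne_zero_of_ne hac.ne'),
    mul_inv_cancel_left₀ (sub_ne_zero_of_ne hcb.ne')]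
  exact (intervalIntegral.integral_add_adjacent_intervals
    (hφα.intervalIntegrable ha (hac.le.trans (hcb.le.trans hb)) (ha.trans hac.le) (hcb.le.trans hb))
    (hφα.intervalIntegrable (ha.trans hac.le) (hcb.le.trans hb)
      (ha.trans (hac.trans hcb).le) hb)).symm

variable [DiscreteTopology X] [DecidableEq X]

def pointIndicator (p : X) : C(X, ℝ) :=
  ⟨fun x => if x = p then 1 else 0, continuous_of_discreteTopology⟩

lemma pointIndicator_apply (p x : X) : pointIndicator p x = if x = p then 1 else 0 := rfl

lemma pointIndicator_nonneg (p x : X) : 0 ≤ pointIndicator p x := by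
  rw [pointIndicator_apply]; split_ifs <;> norm_num

lemma HSet.coord_eq_sum [Fintype X] {γ : SIdx X → ℝ} (hγ : γ ∈ HSet X) (s : SIdx X) :
    γ s = ∑ p, s.φ p * γ (s.withFun (pointIndicator p)) := by
  refine HSet.induction_on hγ (isClosed_eq (continuous_apply s)
    (continuous_finsetSum _ fun p _ => continuous_const.mul (continuous_apply _))) fun α hα => ?_
  have hpt : ∀ t, s.φ (α t) = ∑ p, s.φ p * pointIndicator p (α t) := fun t => by
    simp [pointIndicator_apply]
  show 1 / (s.b - s.a) * ∫ t in s.a..s.b, s.φ (α t) =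
    ∑ p, s.φ p * (1 / (s.b - s.a) * ∫ t in s.a..s.b, pointIndicator p (α t))
  rw [intervalIntegral.integral_congr fun t _ => hpt t,
    intervalIntegral.integral_finsetSum
      fun p _ => (s.intervalIntegrable_comp (pointIndicator p) hα).const_mul _,
    Finset.mul_sum]
  refine Finset.sum_congr rfl fun p _ => ?_
  rw [intervalIntegral.integral_const_mul]
  ring

lemma HSet.ext_of_pointIndicator [Fintype X] {γ δ : SIdx X → ℝ} (hγ : γ ∈ HSet X)
    (hδ : δ ∈ HSet X)
    (h : ∀ (s : SIdx X) (p : X),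
      γ (s.withFun (pointIndicator p)) = δ (s.withFun (pointIndicator p))) :
    γ = δ :=
  funext fun s => by simp only [HSet.coord_eq_sum hγ s, HSet.coord_eq_sum hδ s, h]

lemma HSet.coord_pointIndicator_eq_zero {Y : Type v} [TopologicalSpace Y] [DiscreteTopology Y]
    [DecidableEq Y] {γ : SIdx X → ℝ} (hγ : γ ∈ HSet X) {f : C(X, Y)} {β : ℝ → Y}
    (hf : reindex f γ = eHM β) (s : SIdx X) {q : X} (hβ : ∀ t ∈ Ico s.a s.b, β t ≠ f q) :
    γ (s.withFun (pointIndicator q)) = 0 := by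
  refine le_antisymm ?_ (HSet.coord_nonneg hγ _ (pointIndicator_nonneg q))
  have hle : ∀ x, pointIndicator q x ≤ pointIndicator (f q) (f x) := fun x => by
    by_cases hx : x = q
    · simp [pointIndicator_apply, hx]
    · simpa [pointIndicator_apply, hx] using pointIndicator_nonneg (f q) (f x)
  calc γ (s.withFun (pointIndicator q))
      ≤ γ (s.withFun ((pointIndicator (f q)).comp f)) := HSet.coord_mono hγ _ hle
    _ = eHM β (s.withFun (pointIndicator (f q))) := congrFun hf (s.withFun (pointIndicator (f q)))
    _ = 0 := eHM_eq_zero fun t ht => by simp [SIdx.withFun, pointIndicator_apply, hβ t ht]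

lemma stepIdxNat_lt_iff {n j : ℕ} [NeZero n] {t : ℝ} (ht0 : 0 ≤ t) (ht1 : t < 1) :
    stepIdxNat n t < j ↔ t < j / n := by
  have hn : (0 : ℝ) < n := Nat.cast_pos.2 (Nat.pos_of_ne_zero (NeZero.ne n))
  have hfloor : ⌊t * n⌋₊ < n := (Nat.floor_lt (by positivity)).2 (by nlinarith)
  have hidx : stepIdxNat n t = ⌊t * n⌋₊ := by unfold stepIdxNat; omega
  rw [hidx, Nat.floor_lt (by positivity), lt_div_iff₀ hn]

lemma HSet.coord_pointIndicator_eq_zero_of_lt {n : ℕ} [NeZero n] {γ : SIdx X → ℝ}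
    (hγ : γ ∈ HSet X)
    {f g : C(X, Fin n)} (hf : reindex f γ = eHM (stepIdx n)) (hg : reindex g γ = eHM (stepIdx n))
    {q : X} (hq : f q < g q) (s : SIdx X) : γ (s.withFun (pointIndicator q)) = 0 := by
  set c : ℝ := ((f q : ℕ) + 1 : ℕ) / n
  have hleft : ∀ a b ha hab hb, b ≤ c → γ ⟨pointIndicator q, a, b, ha, hab, hb⟩ = 0 :=
    fun a b ha hab hb hbc =>
      HSet.coord_pointIndicator_eq_zero hγ hg ⟨pointIndicator q, a, b, ha, hab, hb⟩
        fun t ht hβ => by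
        have := (stepIdxNat_lt_iff (ha.trans ht.1) (ht.2.trans_le hb)).2 (ht.2.trans_le hbc)
        exact hq.not_ge (Fin.le_def.2 (by rw [← hβ]; exact Nat.le_of_lt_succ this))
  have hright : ∀ a b ha hab hb, c ≤ a → γ ⟨pointIndicator q, a, b, ha, hab, hb⟩ = 0 :=
    fun a b ha hab hb hca =>
      HSet.coord_pointIndicator_eq_zero hγ hf ⟨pointIndicator q, a, b, ha, hab, hb⟩
        fun t ht hβ => by
        have := (stepIdxNat_lt_iff (ha.trans ht.1) (ht.2.trans_le hb)).not.2
          (hca.trans ht.1).not_gt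
        exact this (by rw [show stepIdxNat n t = f q from congrArg Fin.val hβ]; omega)
  rcases le_or_gt s.b c with hbc | hcb
  · exact hleft _ _ _ _ _ hbc
  rcases le_or_gt c s.a with hca | hac
  · exact hright _ _ _ _ _ hca
  have hsplit := HSet.coord_split hγ (pointIndicator q) s.ha hac hcb s.hb
  rw [hleft _ _ _ _ _ le_rfl, hright _ _ _ _ _ le_rfl, mul_zero, mul_zero, add_zero] at hsplit
  exact (mul_eq_zero.1 hsplit).resolve_left (sub_ne_zero.2 (hac.trans hcb).ne')

end

lemma HSet.coord_pointIndicator_of_marginals {n : ℕ} [NeZero n]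
    {γ : SIdx (Fin n × Fin n) → ℝ} (hγ : γ ∈ HSet (Fin n × Fin n))
    (h1 : reindex (⟨Prod.fst, continuous_fst⟩ : C(Fin n × Fin n, Fin n)) γ = eHM (stepIdx n))
    (h2 : reindex (⟨Prod.snd, continuous_snd⟩ : C(Fin n × Fin n, Fin n)) γ = eHM (stepIdx n))
    (s : SIdx (Fin n × Fin n)) (p : Fin n × Fin n) :
    γ (s.withFun (pointIndicator p)) =
      if p.1 = p.2 then eHM (stepIdx n) (s.withFun (pointIndicator p.1)) else 0 := by
  have hoff : ∀ q : Fin n × Fin n, q.1 ≠ q.2 → γ (s.withFun (pointIndicator q)) = 0 :=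
    fun q hq => hq.lt_or_gt.elim (HSet.coord_pointIndicator_eq_zero_of_lt hγ h1 h2 · s)
      (HSet.coord_pointIndicator_eq_zero_of_lt hγ h2 h1 · s)
  split_ifs with hp
  · obtain ⟨i, j⟩ := p
    obtain rfl : i = j := hp
    calc γ (s.withFun (pointIndicator (i, i)))
        = ∑ q : Fin n × Fin n, pointIndicator i q.1 * γ (s.withFun (pointIndicator q)) := by
          rw [Finset.sum_eq_single (i, i)]
          · simp [pointIndicator_apply]
          · intro q _ hq
            by_cases hqi : q.1 = i
            · rw [hoff q fun h => hq (Prod.ext hqi (h ▸ hqi)), mul_zero]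
            · rw [pointIndicator_apply, if_neg hqi, zero_mul]
          · exact fun h => absurd (Finset.mem_univ _) h
      _ = γ (s.withFun ((pointIndicator i).comp ⟨Prod.fst, continuous_fst⟩)) :=
          (HSet.coord_eq_sum hγ
            (s.withFun ((pointIndicator i).comp ⟨Prod.fst, continuous_fst⟩))).symm
      _ = eHM (stepIdx n) (s.withFun (pointIndicator i)) := congrFun h1 (s.withFun _)
  · exact hoff p hp

/-- If `γ ∈ H(K_n × K_n)` is mapped by both `H(pr_1)` and `H(pr_2)` to `e(β)`,
then the support of `γ` is contained in the diagonal of `K_n × K_n`. -/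
theorem supp_subset_diagonal (n : ℕ) [NeZero n] (γ : SIdx (Fin n × Fin n) → ℝ)
    (hγ : γ ∈ HSet (Fin n × Fin n))
    (h1 : reindex (⟨Prod.fst, continuous_fst⟩ : C(Fin n × Fin n, Fin n)) γ = eHM (stepIdx n))
    (h2 : reindex (⟨Prod.snd, continuous_snd⟩ : C(Fin n × Fin n, Fin n)) γ = eHM (stepIdx n)) :
    suppH γ ⊆ {p : Fin n × Fin n | p.1 = p.2} := by
  have hdiag : eHM (alphaDiag n) ∈ HSet (Fin n × Fin n) :=
    subset_closure ⟨_, isStep_alphaDiag n, rfl⟩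
  have hγ_eq : γ = eHM (alphaDiag n) := HSet.ext_of_pointIndicator hγ hdiag fun s p => by
    rw [HSet.coord_pointIndicator_of_marginals hγ h1 h2,
      HSet.coord_pointIndicator_of_marginals hdiag rfl rfl]
  have hmem : γ ∈ HSetOn (Fin n × Fin n) {p | p.1 = p.2} :=
    hγ_eq ▸ subset_closure ⟨alphaDiag n, ⟨isStep_alphaDiag n, fun _ _ => rfl⟩, rfl⟩
  exact sInter_subset_of_mem ⟨isClosed_discrete _, hmem⟩
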